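/- For any two density matrices ρ, σ on ℂ^d, the trace distance and the Bures distance satisfy (1/2) D_B(ρ,σ)² ≤ D_Tr(ρ,σ) ≤ D_B(ρ,σ). Equivalently, 1 − √F(ρ,σ) ≤ D_Tr(ρ,σ) and D_Tr(ρ,σ)² ≤ 2 − 2√F(ρ,σ). -/

import Mathlib

open scoped BigOperators ComplexOrder
open Matrix

/-- The eigenvalues of a Hermitian matrix, listed in increasing order
(junk value `0` for non-Hermitian matrices). -/
noncomputable def eigsInc {d : ℕ} (A : Matrix (Fin d) (Fin d) ℂ) : Fin d → ℝ :=
  @dite _ A.IsHermitian (Classical.propDecidable _)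
    (fun h => h.eigenvalues ∘ Tuple.sort h.eigenvalues) (fun _ => 0)

/-- The eigenvalues of a Hermitian matrix, listed in decreasing order. -/
noncomputable def eigsDec {d : ℕ} (A : Matrix (Fin d) (Fin d) ℂ) : Fin d → ℝ :=
  fun k => eigsInc A k.rev

/-- Ergotropy `E(ρ,H) = tr(ρH) - ∑ₖ λₖ Eₖ` with `λ` decreasing, `E` increasing. -/
noncomputable def ergotropy {d : ℕ} (ρ H : Matrix (Fin d) (Fin d) ℂ) : ℝ :=
  ((ρ * H).trace).re - ∑ k : Fin d, eigsDec ρ k * eigsInc H k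

/-- Operator norm (ℓ² → ℓ²) of a matrix. -/
noncomputable def opNorm {d : ℕ} (A : Matrix (Fin d) (Fin d) ℂ) : ℝ :=
  ‖Matrix.toEuclideanCLM (𝕜 := ℂ) A‖

/-- The positive semidefinite square root of a positive semidefinite matrix
(the definition `Matrix.PosSemidef.sqrt` of the older Mathlib, since removed). -/
noncomputable def Matrix.PosSemidef.sqrt {n 𝕜 : Type*} [RCLike 𝕜] [Fintype n] [DecidableEq n]
    {A : Matrix n n 𝕜} (hA : A.PosSemidef) : Matrix n n 𝕜 :=
  hA.1.eigenvectorUnitary.1 * diagonal ((↑) ∘ Real.sqrt ∘ hA.1.eigenvalues) *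
    (star hA.1.eigenvectorUnitary : Matrix n n 𝕜)

/-- Trace norm `‖A‖₁ = tr √(AᴴA)`. -/
noncomputable def traceNorm {d : ℕ} (A : Matrix (Fin d) (Fin d) ℂ) : ℝ :=
  ((Matrix.posSemidef_conjTranspose_mul_self A).sqrt.trace).re

/-- Trace distance. -/
noncomputable def traceDist {d : ℕ} (ρ σ : Matrix (Fin d) (Fin d) ℂ) : ℝ :=
  traceNorm (ρ - σ) / 2

/-- Positive semidefinite square root (junk value `0` on non-PSD matrices). -/
noncomputable def psdSqrt {d : ℕ} (A : Matrix (Fin d) (Fin d) ℂ) : Matrix (Fin d) (Fin d) ℂ :=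
  @dite _ A.PosSemidef (Classical.propDecidable _) (fun h => h.sqrt) (fun _ => 0)

/-- Uhlmann fidelity `F(ρ,σ) = (tr √(√ρ σ √ρ))²`. -/
noncomputable def fidelity {d : ℕ} (ρ σ : Matrix (Fin d) (Fin d) ℂ) : ℝ :=
  ((psdSqrt (psdSqrt ρ * σ * psdSqrt ρ)).trace).re ^ 2

/-- Bures distance. -/
noncomputable def buresDist {d : ℕ} (ρ σ : Matrix (Fin d) (Fin d) ℂ) : ℝ :=
  Real.sqrt (2 - 2 * Real.sqrt (fidelity ρ σ))

/-- Hilbert–Schmidt distance. -/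
noncomputable def hsDist {d : ℕ} (ρ σ : Matrix (Fin d) (Fin d) ℂ) : ℝ :=
  Real.sqrt ((((ρ - σ)ᴴ * (ρ - σ)).trace).re)

/-- von Neumann entropy `S(ρ) = -tr(ρ ln ρ) = -∑ᵢ λᵢ ln λᵢ`. -/
noncomputable def vnEntropy {d : ℕ} (ρ : Matrix (Fin d) (Fin d) ℂ) : ℝ :=
  -∑ i : Fin d, eigsInc ρ i * Real.log (eigsInc ρ i)

/-- `ψ ∈ ℂᵈ ⊗ ℂᵈ` is a purification of `ρ`. -/
def IsPurification {d : ℕ} (ρ : Matrix (Fin d) (Fin d) ℂ)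
    (ψ : EuclideanSpace ℂ (Fin d × Fin d)) : Prop :=
  ‖ψ‖ = 1 ∧ ∀ i j, ρ i j = ∑ k : Fin d, ψ (i, k) * (starRingEnd ℂ) (ψ (j, k))

/-- Partial trace over the second tensor factor of `|ψ⟩⟨ψ|`. -/
noncomputable def partialTrace {d : ℕ} (ψ : EuclideanSpace ℂ (Fin d × Fin d)) :
    Matrix (Fin d) (Fin d) ℂ :=
  Matrix.of fun i j => ∑ k : Fin d, ψ (i, k) * (starRingEnd ℂ) (ψ (j, k))

namespace Matrix.PosSemidef
open scoped MatrixOrder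

lemma sqrt_eq_cfcSqrt {n 𝕜 : Type*} [RCLike 𝕜] [Fintype n] [DecidableEq n]
    {A : Matrix n n 𝕜} (hA : A.PosSemidef) : hA.sqrt = CFC.sqrt A := by
  rw [CFC.sqrt_eq_cfc, cfc_nnreal_eq_real _ A hA.nonneg, hA.1.cfc_eq]
  simp only [IsHermitian.cfc, Unitary.conjStarAlgAut_apply, Matrix.PosSemidef.sqrt]
  congr 3
  funext i
  simp [Real.coe_sqrt]
  rw [max_eq_left (hA.eigenvalues_nonneg i)]

lemma posSemidef_sqrt {n 𝕜 : Type*} [RCLike 𝕜] [Fintype n] [DecidableEq n]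
    {A : Matrix n n 𝕜} (hA : A.PosSemidef) : hA.sqrt.PosSemidef := by
  rw [sqrt_eq_cfcSqrt]; exact (CFC.sqrt_nonneg A).posSemidef

lemma sqrt_mul_self {n 𝕜 : Type*} [RCLike 𝕜] [Fintype n] [DecidableEq n]
    {A : Matrix n n 𝕜} (hA : A.PosSemidef) : hA.sqrt * hA.sqrt = A := by
  rw [sqrt_eq_cfcSqrt]; exact CFC.sqrt_mul_sqrt_self A hA.nonneg

lemma eq_sqrt_of_sq_eq {n 𝕜 : Type*} [RCLike 𝕜] [Fintype n] [DecidableEq n]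
    {A B : Matrix n n 𝕜} (hA : A.PosSemidef) (hB : B.PosSemidef) (hsq : A ^ 2 = B) :
    A = hB.sqrt := by
  rw [sqrt_eq_cfcSqrt]
  exact (CFC.sqrt_unique (by rw [← pow_two, hsq]) hA.nonneg).symm

end Matrix.PosSemidef

variable {d : ℕ}

namespace FvG

lemma trace_eq_sum_diag (A : Matrix (Fin d) (Fin d) ℂ) : A.trace = ∑ i, A i i := rfl

lemma psd_diag_nonneg {A : Matrix (Fin d) (Fin d) ℂ} (hA : A.PosSemidef) (i : Fin d) :
    0 ≤ (A i i).re ∧ (A i i).im = 0 := by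
  have h := hA.dotProduct_mulVec_nonneg (Pi.single i 1)
  have h1 : A *ᵥ Pi.single i (1:ℂ) = fun j => A j i := by
    ext j
    simp [Matrix.mulVec, dotProduct, Pi.single_apply]
  have hx : dotProduct (star (Pi.single i (1:ℂ))) (A *ᵥ Pi.single i 1) = A i i := by
    rw [h1]
    simp [dotProduct, Pi.single_apply, apply_ite (star : ℂ → ℂ)]
  rw [hx] at h
  exact ⟨(RCLike.nonneg_iff.mp h).1, (RCLike.nonneg_iff.mp h).2⟩

lemma psd_trace_re_nonneg {A : Matrix (Fin d) (Fin d) ℂ} (hA : A.PosSemidef) :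
    0 ≤ A.trace.re := by
  rw [trace_eq_sum_diag, Complex.re_sum]
  exact Finset.sum_nonneg fun i _ => (psd_diag_nonneg hA i).1

lemma sqrt_congr {A B : Matrix (Fin d) (Fin d) ℂ} (hA : A.PosSemidef) (hB : B.PosSemidef)
    (h : A = B) : hA.sqrt = hB.sqrt := by subst h; rfl

lemma sqrt_conj_unitary {A : Matrix (Fin d) (Fin d) ℂ} (hA : A.PosSemidef)
    (U : Matrix (Fin d) (Fin d) ℂ) (hU : U ∈ Matrix.unitaryGroup (Fin d) ℂ)
    (hcA : (Uᴴ * A * U).PosSemidef) :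
    hcA.sqrt = Uᴴ * hA.sqrt * U := by
  have h1 : U * Uᴴ = 1 := by
    simpa [Matrix.star_eq_conjTranspose] using (Matrix.mem_unitaryGroup_iff.mp hU)
  have hsq : (Uᴴ * hA.sqrt * U) ^ 2 = Uᴴ * A * U := by
    have h2 : Uᴴ * hA.sqrt * U * (Uᴴ * hA.sqrt * U)
        = Uᴴ * (hA.sqrt * (U * Uᴴ) * hA.sqrt) * U := by noncomm_ring
    rw [pow_two, h2, h1, Matrix.mul_one, hA.sqrt_mul_self]
  have hpsd : (Uᴴ * hA.sqrt * U).PosSemidef := hA.posSemidef_sqrt.conjTranspose_mul_mul_same U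
  exact (hpsd.eq_sqrt_of_sq_eq hcA hsq).symm

/-- Frobenius norm squared. -/
noncomputable def frobSq (A : Matrix (Fin d) (Fin d) ℂ) : ℝ := ((Aᴴ * A).trace).re

lemma frobSq_eq_sum (A : Matrix (Fin d) (Fin d) ℂ) :
    frobSq A = ∑ i, ∑ j, ‖A j i‖ ^ 2 := by
  unfold frobSq
  rw [trace_eq_sum_diag, Complex.re_sum]
  refine Finset.sum_congr rfl fun i _ => ?_
  rw [Matrix.mul_apply, Complex.re_sum]
  refine Finset.sum_congr rfl fun j _ => ?_
  rw [Matrix.conjTranspose_apply]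
  have h : star (A j i) * A j i = ((Complex.normSq (A j i) : ℝ) : ℂ) :=
    (Complex.normSq_eq_conj_mul_self).symm
  rw [h, Complex.ofReal_re, Complex.sq_norm]

lemma frobSq_nonneg (A : Matrix (Fin d) (Fin d) ℂ) : 0 ≤ frobSq A := by
  rw [frobSq_eq_sum]
  positivity

lemma frobSq_conjTranspose (A : Matrix (Fin d) (Fin d) ℂ) : frobSq Aᴴ = frobSq A := by
  unfold frobSq
  rw [Matrix.conjTranspose_conjTranspose, Matrix.trace_mul_comm]

lemma frobSq_real_smul (c : ℝ) (A : Matrix (Fin d) (Fin d) ℂ) :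
    frobSq ((c : ℂ) • A) = c ^ 2 * frobSq A := by
  unfold frobSq
  rw [Matrix.conjTranspose_smul, Matrix.smul_mul, Matrix.mul_smul, smul_smul]
  rw [Matrix.trace_smul]
  have h : (star (c:ℂ) * (c:ℂ)) = (((c^2 : ℝ)) : ℂ) := by
    rw [RCLike.star_def, Complex.conj_ofReal]
    push_cast
    ring
  rw [h, smul_eq_mul, Complex.re_ofReal_mul]

/-- Cauchy-Schwarz for the Frobenius inner product (real-part version). -/
lemma re_trace_conjTranspose_mul_le (A B : Matrix (Fin d) (Fin d) ℂ) :
    ((Aᴴ * B).trace).re ≤ Real.sqrt (frobSq A) * Real.sqrt (frobSq B) := by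
  have h1 : ((Aᴴ * B).trace).re = ∑ p : Fin d × Fin d, (starRingEnd ℂ (A p.2 p.1) * B p.2 p.1).re := by
    rw [trace_eq_sum_diag, Complex.re_sum, Fintype.sum_prod_type]
    refine Finset.sum_congr rfl fun i _ => ?_
    rw [Matrix.mul_apply, Complex.re_sum]
    refine Finset.sum_congr rfl fun j _ => ?_
    rw [Matrix.conjTranspose_apply]
    rfl
  have h2 : ∀ p : Fin d × Fin d, (starRingEnd ℂ (A p.2 p.1) * B p.2 p.1).re
      ≤ ‖A p.2 p.1‖ * ‖B p.2 p.1‖ := by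
    intro p
    calc (starRingEnd ℂ (A p.2 p.1) * B p.2 p.1).re
        ≤ ‖starRingEnd ℂ (A p.2 p.1) * B p.2 p.1‖ := Complex.re_le_norm _
      _ = ‖A p.2 p.1‖ * ‖B p.2 p.1‖ := by rw [norm_mul, RCLike.norm_conj]
  have h3 := Real.sum_mul_le_sqrt_mul_sqrt (Finset.univ : Finset (Fin d × Fin d))
    (fun p => ‖A p.2 p.1‖) (fun p => ‖B p.2 p.1‖)
  have h4 : frobSq A = ∑ p : Fin d × Fin d, ‖A p.2 p.1‖ ^ 2 := by
    rw [frobSq_eq_sum, Fintype.sum_prod_type]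
  have h5 : frobSq B = ∑ p : Fin d × Fin d, ‖B p.2 p.1‖ ^ 2 := by
    rw [frobSq_eq_sum, Fintype.sum_prod_type]
  rw [h1, h4, h5]
  exact le_trans (Finset.sum_le_sum fun p _ => h2 p) h3

end FvG

namespace FvG

/-- Polar decomposition of a square complex matrix. -/
lemma polar (Z : Matrix (Fin d) (Fin d) ℂ) :
    ∃ U ∈ Matrix.unitaryGroup (Fin d) ℂ,
      Z = U * (Matrix.posSemidef_conjTranspose_mul_self Z).sqrt := by
  classical
  have hP := Matrix.posSemidef_conjTranspose_mul_self Z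
  have hH : (Zᴴ * Z).IsHermitian := hP.1
  set V : Matrix (Fin d) (Fin d) ℂ := (hH.eigenvectorUnitary : Matrix (Fin d) (Fin d) ℂ) with hVdef
  set lam : Fin d → ℝ := hH.eigenvalues with hlamdef
  have hlam : ∀ i, 0 ≤ lam i := fun i => hP.eigenvalues_nonneg i
  have hVmem : V ∈ Matrix.unitaryGroup (Fin d) ℂ := (hH.eigenvectorUnitary).2
  have hVV : Vᴴ * V = 1 := by
    simpa [Matrix.star_eq_conjTranspose] using (Matrix.mem_unitaryGroup_iff'.mp hVmem)
  have hVV' : V * Vᴴ = 1 := by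
    simpa [Matrix.star_eq_conjTranspose] using (Matrix.mem_unitaryGroup_iff.mp hVmem)
  have hdiag : Vᴴ * (Zᴴ * Z) * V = Matrix.diagonal (fun i => (lam i : ℂ)) := by
    have := hH.conjStarAlgAut_star_eigenvectorUnitary
    simpa [Matrix.star_eq_conjTranspose, Function.comp_def] using this
  have hsqrt : (Matrix.posSemidef_conjTranspose_mul_self Z).sqrt
      = V * Matrix.diagonal (fun i => (Real.sqrt (lam i) : ℂ)) * Vᴴ := rfl
  -- columns of Z * V
  set c : Fin d → EuclideanSpace ℂ (Fin d) := fun i => WithLp.toLp 2 (fun k => (Z * V) k i) with hcdef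
  have hinner : ∀ i j, (inner ℂ (c i) (c j) : ℂ) = if i = j then (lam i : ℂ) else 0 := by
    intro i j
    have h1 : (inner ℂ (c i) (c j) : ℂ) = ((Z * V)ᴴ * (Z * V)) i j := by
      rw [Matrix.mul_apply]
      rw [PiLp.inner_apply]
      refine Finset.sum_congr rfl fun k _ => ?_
      rw [Matrix.conjTranspose_apply]
      simp [RCLike.inner_apply, hcdef, mul_comm]
    have h2 : (Z * V)ᴴ * (Z * V) = Matrix.diagonal (fun i => (lam i : ℂ)) := by
      rw [Matrix.conjTranspose_mul]
      calc Vᴴ * Zᴴ * (Z * V) = Vᴴ * (Zᴴ * Z) * V := by noncomm_ring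
        _ = _ := hdiag
    rw [h1, h2, Matrix.diagonal_apply]
  -- an orthonormal family indexed by nonzero eigenvalues
  set s : Set (Fin d) := {i | lam i ≠ 0} with hsdef
  set v : Fin d → EuclideanSpace ℂ (Fin d) :=
    fun i => (((Real.sqrt (lam i))⁻¹ : ℝ) : ℂ) • c i with hvdef
  have hv : Orthonormal ℂ (s.restrict v) := by
    rw [orthonormal_iff_ite]
    intro i j
    have hii : lam (i : Fin d) ≠ 0 := i.2
    have hjj : lam (j : Fin d) ≠ 0 := j.2
    have hspos : ∀ m : Fin d, lam m ≠ 0 → Real.sqrt (lam m) ≠ 0 := by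
      intro m hm
      exact Real.sqrt_ne_zero'.mpr (lt_of_le_of_ne (hlam m) (Ne.symm hm))
    simp only [Set.restrict_apply, hvdef]
    change inner ℂ ((((Real.sqrt (lam i))⁻¹ : ℝ) : ℂ) • c i)
      ((((Real.sqrt (lam j))⁻¹ : ℝ) : ℂ) • c j) = _
    rw [inner_smul_left, inner_smul_right, hinner]
    by_cases hij : (i : Fin d) = (j : Fin d)
    · have : i = j := Subtype.ext hij
      subst this
      simp only [if_pos rfl, if_pos rfl]
      rw [Complex.conj_ofReal]
      have hs' : ((Real.sqrt (lam (i:Fin d)) : ℝ) : ℂ) ≠ 0 :=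
        Complex.ofReal_ne_zero.mpr (hspos _ hii)
      rw [show ((lam (i:Fin d) : ℝ) : ℂ)
          = ((Real.sqrt (lam (i:Fin d)) : ℝ) : ℂ) * ((Real.sqrt (lam (i:Fin d)) : ℝ) : ℂ) by
        rw [← Complex.ofReal_mul, Real.mul_self_sqrt (hlam _)]]
      field_simp
      simp only [if_true]
      rw [← Complex.ofReal_pow, ← Complex.ofReal_pow, ← Complex.ofReal_mul, div_pow, one_pow,
        Real.sq_sqrt (hlam _), one_div, inv_mul_cancel₀ hii, Complex.ofReal_one]
    · have : ¬ (i = j) := fun h => hij (congrArg _ h)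
      simp [hij, this]
  have card : Module.finrank ℂ (EuclideanSpace ℂ (Fin d)) = Fintype.card (Fin d) := by
    rw [finrank_euclideanSpace]
  obtain ⟨b, hb⟩ := hv.exists_orthonormalBasis_extension_of_card_eq card
  set U' : Matrix (Fin d) (Fin d) ℂ := Matrix.of (fun k i => b i k) with hU'def
  have hU'mem : U' ∈ Matrix.unitaryGroup (Fin d) ℂ := by
    rw [Matrix.mem_unitaryGroup_iff']
    ext i j
    have h1 : (star U' * U') i j = (inner ℂ (b i) (b j) : ℂ) := by
      rw [Matrix.star_eq_conjTranspose, Matrix.mul_apply, PiLp.inner_apply]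
      refine Finset.sum_congr rfl fun k _ => ?_
      rw [Matrix.conjTranspose_apply]
      simp [RCLike.inner_apply, hU'def, mul_comm]
    rw [h1, orthonormal_iff_ite.mp b.orthonormal i j, Matrix.one_apply]
  have hZV : Z * V = U' * Matrix.diagonal (fun i => (Real.sqrt (lam i) : ℂ)) := by
    ext k i
    rw [Matrix.mul_diagonal]
    by_cases hi : lam i = 0
    · have hc0 : c i = 0 := by
        have := hinner i i
        rw [if_pos rfl, hi] at this
        have h0 : (inner ℂ (c i) (c i) : ℂ) = 0 := by simpa using this
        exact inner_self_eq_zero.mp h0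
      have hlhs : (Z * V) k i = 0 := by
        have : c i k = 0 := by rw [hc0]; rfl
        simpa [hcdef] using this
      rw [hlhs, hi]
      simp
    · have hmem : i ∈ s := hi
      have hbi : b i = v i := hb i hmem
      have hs := Real.sqrt_ne_zero'.mpr (lt_of_le_of_ne (hlam i) (Ne.symm hi))
      have hU'ki : U' k i = (((Real.sqrt (lam i))⁻¹ : ℝ) : ℂ) * (Z * V) k i := by
        simp only [hU'def, Matrix.of_apply]
        rw [hbi]
        simp only [hvdef]
        rfl
      rw [hU'ki]
      rw [mul_comm (((Real.sqrt (lam i))⁻¹ : ℝ) : ℂ) _, mul_assoc]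
      rw [← Complex.ofReal_mul]
      rw [inv_mul_cancel₀ hs]
      simp
  refine ⟨U' * Vᴴ, ?_, ?_⟩
  · exact mul_mem hU'mem (by simpa [Matrix.star_eq_conjTranspose] using Unitary.star_mem hVmem)
  · rw [hsqrt]
    calc Z = Z * (V * Vᴴ) := by rw [hVV', Matrix.mul_one]
      _ = (Z * V) * Vᴴ := by rw [Matrix.mul_assoc]
      _ = U' * Matrix.diagonal (fun i => (Real.sqrt (lam i) : ℂ)) * Vᴴ := by rw [hZV]
      _ = U' * Vᴴ * (V * Matrix.diagonal (fun i => (Real.sqrt (lam i) : ℂ)) * Vᴴ) := by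
          have : U' * Vᴴ * (V * Matrix.diagonal (fun i => (Real.sqrt (lam i) : ℂ)) * Vᴴ)
              = U' * (Vᴴ * V) * Matrix.diagonal (fun i => (Real.sqrt (lam i) : ℂ)) * Vᴴ := by
            noncomm_ring
          rw [this, hVV, Matrix.mul_one]

end FvG


namespace FvG

lemma traceNorm_nonneg (A : Matrix (Fin d) (Fin d) ℂ) : 0 ≤ traceNorm A :=
  psd_trace_re_nonneg (Matrix.posSemidef_conjTranspose_mul_self A).posSemidef_sqrt

lemma norm_col_sq (X : Matrix (Fin d) (Fin d) ℂ) (i : Fin d) :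
    ((Xᴴ * X) i i).re = ∑ k, ‖X k i‖ ^ 2 := by
  rw [Matrix.mul_apply, Complex.re_sum]
  refine Finset.sum_congr rfl fun k _ => ?_
  rw [Matrix.conjTranspose_apply]
  have h : star (X k i) * X k i = ((Complex.normSq (X k i) : ℝ) : ℂ) :=
    (Complex.normSq_eq_conj_mul_self).symm
  rw [h, Complex.ofReal_re, Complex.sq_norm]

/-- The real part of the trace is at most the trace norm. -/
lemma re_trace_le_traceNorm (Z : Matrix (Fin d) (Fin d) ℂ) :
    (Z.trace).re ≤ traceNorm Z := by
  classical
  obtain ⟨U, hU, hZ⟩ := polar Z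
  have hUU : Uᴴ * U = 1 := by
    simpa [Matrix.star_eq_conjTranspose] using (Matrix.mem_unitaryGroup_iff'.mp hU)
  set hP := Matrix.posSemidef_conjTranspose_mul_self Z with hPdef
  set P := hP.sqrt with hPd
  have hQpsd := hP.posSemidef_sqrt
  set Q := hQpsd.sqrt with hQd
  have hQQ : Q * Q = P := hQpsd.sqrt_mul_self
  have hQH : Qᴴ = Q := hQpsd.posSemidef_sqrt.1
  have htr : Z.trace = (Q * (U * Q)).trace := by
    rw [hZ, ← hQQ]
    rw [← Matrix.mul_assoc, Matrix.trace_mul_cycle, Matrix.mul_assoc]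
  -- columns of Q and of U * Q
  set q : Fin d → EuclideanSpace ℂ (Fin d) := fun i => WithLp.toLp 2 (fun k => Q k i) with hqdef
  set w : Fin d → EuclideanSpace ℂ (Fin d) := fun i => WithLp.toLp 2 (fun k => (U * Q) k i) with hwdef
  have hdiag : ∀ i, (Q * (U * Q)) i i = (inner ℂ (q i) (w i) : ℂ) := by
    intro i
    rw [Matrix.mul_apply, PiLp.inner_apply]
    refine Finset.sum_congr rfl fun j _ => ?_
    have hQ' : Q i j = star (Q j i) := by
      conv_lhs => rw [← hQH]
      rfl
    rw [hQ']
    simp [RCLike.inner_apply, hqdef, hwdef, mul_comm]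
  have hwq : ∀ i, ∑ k, ‖(U * Q) k i‖ ^ 2 = ∑ k, ‖Q k i‖ ^ 2 := by
    intro i
    rw [← norm_col_sq, ← norm_col_sq]
    have h : (U * Q)ᴴ * (U * Q) = Qᴴ * Q := by
      rw [Matrix.conjTranspose_mul]
      calc Qᴴ * Uᴴ * (U * Q) = Qᴴ * (Uᴴ * U) * Q := by noncomm_ring
        _ = Qᴴ * Q := by rw [hUU, Matrix.mul_one]
    rw [h]
  have hnq : ∀ i, ‖q i‖ ^ 2 = ∑ k, ‖Q k i‖ ^ 2 := by
    intro i
    rw [EuclideanSpace.norm_eq, Real.sq_sqrt (by positivity)]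
  have hnw : ∀ i, ‖w i‖ ^ 2 = ∑ k, ‖Q k i‖ ^ 2 := by
    intro i
    rw [EuclideanSpace.norm_eq, Real.sq_sqrt (by positivity)]
    exact hwq i
  have key : ∀ i, ((Q * (U * Q)) i i).re ≤ ∑ k, ‖Q k i‖ ^ 2 := by
    intro i
    rw [hdiag i]
    calc (inner ℂ (q i) (w i) : ℂ).re ≤ ‖(inner ℂ (q i) (w i) : ℂ)‖ := Complex.re_le_norm _
      _ ≤ ‖q i‖ * ‖w i‖ := norm_inner_le_norm _ _
      _ = ∑ k, ‖Q k i‖ ^ 2 := by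
          have h3 : (0:ℝ) ≤ ∑ k, ‖Q k i‖ ^ 2 := by positivity
          have hq' : ‖q i‖ = Real.sqrt (∑ k, ‖Q k i‖ ^ 2) := by
            rw [← hnq i, Real.sqrt_sq (norm_nonneg _)]
          have hw' : ‖w i‖ = Real.sqrt (∑ k, ‖Q k i‖ ^ 2) := by
            rw [← hnw i, Real.sqrt_sq (norm_nonneg _)]
          rw [hq', hw', Real.mul_self_sqrt h3]
  have hfin : ∑ i, ∑ k, ‖Q k i‖ ^ 2 = P.trace.re := by
    rw [← hQQ, trace_eq_sum_diag, Complex.re_sum]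
    refine Finset.sum_congr rfl fun i _ => ?_
    rw [← norm_col_sq, hQH]
  calc Z.trace.re = ((Q * (U * Q)).trace).re := by rw [htr]
    _ = ∑ i, ((Q * (U * Q)) i i).re := by rw [trace_eq_sum_diag, Complex.re_sum]
    _ ≤ ∑ i, ∑ k, ‖Q k i‖ ^ 2 := Finset.sum_le_sum fun i _ => key i
    _ = P.trace.re := hfin
    _ = traceNorm Z := rfl

lemma traceNorm_unitary_left {U : Matrix (Fin d) (Fin d) ℂ}
    (hU : U ∈ Matrix.unitaryGroup (Fin d) ℂ) (A : Matrix (Fin d) (Fin d) ℂ) :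
    traceNorm (U * A) = traceNorm A := by
  have hUU : Uᴴ * U = 1 := by
    simpa [Matrix.star_eq_conjTranspose] using (Matrix.mem_unitaryGroup_iff'.mp hU)
  have h : (U * A)ᴴ * (U * A) = Aᴴ * A := by
    rw [Matrix.conjTranspose_mul]
    calc Aᴴ * Uᴴ * (U * A) = Aᴴ * (Uᴴ * U) * A := by noncomm_ring
      _ = Aᴴ * A := by rw [hUU, Matrix.mul_one]
  unfold traceNorm
  rw [sqrt_congr (Matrix.posSemidef_conjTranspose_mul_self (U * A))
    (Matrix.posSemidef_conjTranspose_mul_self A) h]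

lemma traceNorm_unitary_right {U : Matrix (Fin d) (Fin d) ℂ}
    (hU : U ∈ Matrix.unitaryGroup (Fin d) ℂ) (A : Matrix (Fin d) (Fin d) ℂ) :
    traceNorm (A * U) = traceNorm A := by
  have hUU' : U * Uᴴ = 1 := by
    simpa [Matrix.star_eq_conjTranspose] using (Matrix.mem_unitaryGroup_iff.mp hU)
  have h : (A * U)ᴴ * (A * U) = Uᴴ * (Aᴴ * A) * U := by
    rw [Matrix.conjTranspose_mul]; noncomm_ring
  have hc : (Uᴴ * (Aᴴ * A) * U).PosSemidef :=
    (Matrix.posSemidef_conjTranspose_mul_self A).conjTranspose_mul_mul_same U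
  unfold traceNorm
  rw [sqrt_congr (Matrix.posSemidef_conjTranspose_mul_self (A * U)) hc h]
  rw [sqrt_conj_unitary (Matrix.posSemidef_conjTranspose_mul_self A) U hU hc]
  rw [Matrix.trace_mul_cycle]
  rw [hUU', Matrix.one_mul]

lemma traceNorm_triangle (X Y : Matrix (Fin d) (Fin d) ℂ) :
    traceNorm (X + Y) ≤ traceNorm X + traceNorm Y := by
  obtain ⟨U, hU, hXY⟩ := polar (X + Y)
  have hUU : Uᴴ * U = 1 := by
    simpa [Matrix.star_eq_conjTranspose] using (Matrix.mem_unitaryGroup_iff'.mp hU)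
  have hUst : Uᴴ ∈ Matrix.unitaryGroup (Fin d) ℂ := by
    simpa [Matrix.star_eq_conjTranspose] using Unitary.star_mem hU
  have hP : (Matrix.posSemidef_conjTranspose_mul_self (X + Y)).sqrt = Uᴴ * X + Uᴴ * Y := by
    have h1 : Uᴴ * (X + Y) = Uᴴ * (U * (Matrix.posSemidef_conjTranspose_mul_self (X + Y)).sqrt) := by
      rw [← hXY]
    rw [← Matrix.mul_assoc, hUU, Matrix.one_mul] at h1
    rw [← h1, Matrix.mul_add]
  have : traceNorm (X + Y) = ((Uᴴ * X).trace).re + ((Uᴴ * Y).trace).re := by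
    unfold traceNorm
    rw [hP, Matrix.trace_add, Complex.add_re]
  rw [this]
  have hx := re_trace_le_traceNorm (Uᴴ * X)
  have hy := re_trace_le_traceNorm (Uᴴ * Y)
  rw [traceNorm_unitary_left hUst X] at hx
  rw [traceNorm_unitary_left hUst Y] at hy
  exact add_le_add hx hy

/-- Hölder / Cauchy-Schwarz for the trace norm of a product. -/
lemma traceNorm_mul_le (X Y : Matrix (Fin d) (Fin d) ℂ) :
    traceNorm (X * Y) ≤ Real.sqrt (frobSq X) * Real.sqrt (frobSq Y) := by
  obtain ⟨U, hU, hXY⟩ := polar (X * Y)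
  have hUU : Uᴴ * U = 1 := by
    simpa [Matrix.star_eq_conjTranspose] using (Matrix.mem_unitaryGroup_iff'.mp hU)
  have hP : (Matrix.posSemidef_conjTranspose_mul_self (X * Y)).sqrt = (Xᴴ * U)ᴴ * Y := by
    have h1 : Uᴴ * (X * Y) = Uᴴ * (U * (Matrix.posSemidef_conjTranspose_mul_self (X * Y)).sqrt) := by
      rw [← hXY]
    rw [← Matrix.mul_assoc, ← Matrix.mul_assoc, hUU, Matrix.one_mul] at h1
    rw [← h1, Matrix.conjTranspose_mul, Matrix.conjTranspose_conjTranspose]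
  have h2 : traceNorm (X * Y) = (((Xᴴ * U)ᴴ * Y).trace).re := by
    unfold traceNorm; rw [hP]
  have h3 := re_trace_conjTranspose_mul_le (Xᴴ * U) Y
  have h4 : frobSq (Xᴴ * U) = frobSq X := by
    unfold frobSq
    have : (Xᴴ * U)ᴴ * (Xᴴ * U) = Uᴴ * (X * Xᴴ) * U := by
      rw [Matrix.conjTranspose_mul, Matrix.conjTranspose_conjTranspose]; noncomm_ring
    rw [this, Matrix.trace_mul_cycle, ← Matrix.mul_assoc]
    have hUU' : U * Uᴴ = 1 := by
      simpa [Matrix.star_eq_conjTranspose] using (Matrix.mem_unitaryGroup_iff.mp hU)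
    rw [hUU', Matrix.one_mul, Matrix.trace_mul_comm]
  rw [h2, ← h4]
  exact h3

/-- The trace norm of a positive semidefinite matrix is its trace. -/
lemma traceNorm_psd {A : Matrix (Fin d) (Fin d) ℂ} (hA : A.PosSemidef) :
    traceNorm A = A.trace.re := by
  unfold traceNorm
  have h : A = (Matrix.posSemidef_conjTranspose_mul_self A).sqrt := by
    refine hA.eq_sqrt_of_sq_eq _ ?_
    rw [hA.1, pow_two]
  rw [← h]

end FvG

namespace FvG

lemma conj_add (M N X Y : Matrix (Fin d) (Fin d) ℂ) :
    M * X * N + M * Y * N = M * (X + Y) * N := by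
  rw [Matrix.mul_add, Matrix.add_mul]

lemma conj_sub (M N X Y : Matrix (Fin d) (Fin d) ℂ) :
    M * X * N - M * Y * N = M * (X - Y) * N := by
  rw [Matrix.mul_sub, Matrix.sub_mul]

lemma conj_mul_mid {M N : Matrix (Fin d) (Fin d) ℂ} (h : N * M = 1)
    (X Y : Matrix (Fin d) (Fin d) ℂ) :
    (M * X * N) * (M * Y * N) = M * (X * Y) * N := by
  have h2 : (M * X * N) * (M * Y * N) = M * (X * (N * M) * Y) * N := by noncomm_ring
  rw [h2, h, Matrix.mul_one]

/-- For a Hermitian matrix, the sum of absolute values of (real) diagonal entries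
is at most the trace norm. -/
lemma sum_abs_diag_re_le_traceNorm {D : Matrix (Fin d) (Fin d) ℂ} (hD : D.IsHermitian) :
    ∑ i, |(D i i).re| ≤ traceNorm D := by
  classical
  obtain ⟨V, hVdef⟩ : ∃ V, V = (hD.eigenvectorUnitary : Matrix (Fin d) (Fin d) ℂ) := ⟨_, rfl⟩
  obtain ⟨mu, hmudef⟩ : ∃ m, m = hD.eigenvalues := ⟨_, rfl⟩
  have hVmem : V ∈ Matrix.unitaryGroup (Fin d) ℂ := by
    rw [hVdef]; exact (hD.eigenvectorUnitary).2
  have hVV : Vᴴ * V = 1 := by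
    simpa [Matrix.star_eq_conjTranspose] using (Matrix.mem_unitaryGroup_iff'.mp hVmem)
  have hspec : D = V * Matrix.diagonal (fun i => ((mu i : ℝ) : ℂ)) * Vᴴ := by
    rw [hVdef, hmudef]
    have := hD.spectral_theorem
    simpa [Matrix.star_eq_conjTranspose, Function.comp_def] using this
  obtain ⟨absD, habsdef⟩ :
      ∃ M, M = V * Matrix.diagonal (fun i => ((|mu i| : ℝ) : ℂ)) * Vᴴ := ⟨_, rfl⟩
  have hdiagpsd : ∀ (f : Fin d → ℝ), (∀ i, 0 ≤ f i) →
      (V * Matrix.diagonal (fun i => ((f i : ℝ) : ℂ)) * Vᴴ).PosSemidef := by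
    intro f hf
    refine Matrix.PosSemidef.mul_mul_conjTranspose_same ?_ V
    rw [Matrix.posSemidef_diagonal_iff]
    intro i
    rw [Complex.le_def]
    simp [hf i]
  have habs_psd : absD.PosSemidef := by
    rw [habsdef]; exact hdiagpsd _ (fun i => abs_nonneg _)
  have hsq : absD ^ 2 = Dᴴ * D := by
    rw [pow_two, hD.eq, habsdef, conj_mul_mid hVV, Matrix.diagonal_mul_diagonal]
    conv_rhs => rw [hspec]
    rw [conj_mul_mid hVV, Matrix.diagonal_mul_diagonal]
    rw [show (fun i => ((|mu i| : ℝ) : ℂ) * ((|mu i| : ℝ) : ℂ))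
        = (fun i => ((mu i : ℝ) : ℂ) * ((mu i : ℝ) : ℂ)) from by
      funext i
      rw [← Complex.ofReal_mul, ← Complex.ofReal_mul, abs_mul_abs_self]]
  have hsqrt_eq : (Matrix.posSemidef_conjTranspose_mul_self D).sqrt = absD :=
    (habs_psd.eq_sqrt_of_sq_eq _ hsq).symm
  have htn : traceNorm D = ∑ i, (absD i i).re := by
    unfold traceNorm
    rw [hsqrt_eq, trace_eq_sum_diag, Complex.re_sum]
  have hplus : (absD + D).PosSemidef := by
    have h : absD + D = V * Matrix.diagonal (fun i => ((|mu i| + mu i : ℝ) : ℂ)) * Vᴴ := by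
      rw [habsdef]
      conv_lhs => rw [hspec]
      rw [conj_add, show Matrix.diagonal (fun i => ((|mu i| : ℝ) : ℂ))
          + Matrix.diagonal (fun i => ((mu i : ℝ) : ℂ))
          = Matrix.diagonal (fun i => ((|mu i| + mu i : ℝ) : ℂ)) from by
        rw [Matrix.diagonal_add]
        congr 1
        funext i
        push_cast
        ring]
    rw [h]
    exact hdiagpsd _ (fun i => by linarith [neg_abs_le (mu i)])
  have hminus : (absD - D).PosSemidef := by
    have h : absD - D = V * Matrix.diagonal (fun i => ((|mu i| - mu i : ℝ) : ℂ)) * Vᴴ := by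
      rw [habsdef]
      conv_lhs => rw [hspec]
      rw [conj_sub, show Matrix.diagonal (fun i => ((|mu i| : ℝ) : ℂ))
          - Matrix.diagonal (fun i => ((mu i : ℝ) : ℂ))
          = Matrix.diagonal (fun i => ((|mu i| - mu i : ℝ) : ℂ)) from by
        rw [Matrix.diagonal_sub]
        congr 1
        funext i
        push_cast
        ring]
    rw [h]
    exact hdiagpsd _ (fun i => by simp [sub_nonneg, le_abs_self])
  rw [htn]
  refine Finset.sum_le_sum fun i _ => ?_
  have h1 := (psd_diag_nonneg hplus i).1
  have h2 := (psd_diag_nonneg hminus i).1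
  rw [Matrix.add_apply, Complex.add_re] at h1
  rw [Matrix.sub_apply, Complex.sub_re] at h2
  exact abs_le.mpr ⟨by linarith, by linarith⟩

/-- Powers–Størmer inequality. -/
lemma powers_stormer {A B : Matrix (Fin d) (Fin d) ℂ} (hA : A.PosSemidef) (hB : B.PosSemidef) :
    (((A - B) * (A - B)).trace).re ≤ traceNorm (A * A - B * B) := by
  classical
  obtain ⟨T, hTdef⟩ : ∃ T, T = A - B := ⟨_, rfl⟩
  obtain ⟨S, hSdef⟩ : ∃ S, S = A + B := ⟨_, rfl⟩
  obtain ⟨Delta, hDeltadef⟩ : ∃ M, M = A * A - B * B := ⟨_, rfl⟩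
  have hT : T.IsHermitian := by rw [hTdef]; exact hA.1.sub hB.1
  obtain ⟨W, hWdef⟩ : ∃ W, W = (hT.eigenvectorUnitary : Matrix (Fin d) (Fin d) ℂ) := ⟨_, rfl⟩
  obtain ⟨lam, hlamdef⟩ : ∃ l, l = hT.eigenvalues := ⟨_, rfl⟩
  have hWmem : W ∈ Matrix.unitaryGroup (Fin d) ℂ := by
    rw [hWdef]; exact (hT.eigenvectorUnitary).2
  have hWW : Wᴴ * W = 1 := by
    simpa [Matrix.star_eq_conjTranspose] using (Matrix.mem_unitaryGroup_iff'.mp hWmem)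
  have hWW' : W * Wᴴ = 1 := by
    simpa [Matrix.star_eq_conjTranspose] using (Matrix.mem_unitaryGroup_iff.mp hWmem)
  have hWst : Wᴴ ∈ Matrix.unitaryGroup (Fin d) ℂ := by
    simpa [Matrix.star_eq_conjTranspose] using Unitary.star_mem hWmem
  have hTW : Wᴴ * T * W = Matrix.diagonal (fun i => ((lam i : ℝ) : ℂ)) := by
    rw [hWdef, hlamdef]
    have := hT.conjStarAlgAut_star_eigenvectorUnitary
    simpa [Matrix.star_eq_conjTranspose, Function.comp_def] using this
  have hTspec : T = W * Matrix.diagonal (fun i => ((lam i : ℝ) : ℂ)) * Wᴴ := by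
    rw [hWdef, hlamdef]
    have := hT.spectral_theorem
    simpa [Matrix.star_eq_conjTranspose, Function.comp_def] using this
  obtain ⟨S', hS'def⟩ : ∃ S', S' = Wᴴ * S * W := ⟨_, rfl⟩
  have hS'psd : S'.PosSemidef := by
    rw [hS'def, hSdef]; exact (hA.add hB).conjTranspose_mul_mul_same W
  have hDelta2 : Delta + Delta = T * S + S * T := by
    rw [hDeltadef, hTdef, hSdef]; noncomm_ring
  obtain ⟨D, hDdef⟩ : ∃ D, D = Wᴴ * Delta * W := ⟨_, rfl⟩
  have hDH : D.IsHermitian := by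
    rw [hDdef]
    refine Matrix.isHermitian_conjTranspose_mul_mul W ?_
    rw [hDeltadef]
    have hAA : (A * A).IsHermitian := by
      unfold Matrix.IsHermitian
      rw [Matrix.conjTranspose_mul, hA.1]
    have hBB : (B * B).IsHermitian := by
      unfold Matrix.IsHermitian
      rw [Matrix.conjTranspose_mul, hB.1]
    exact hAA.sub hBB
  have hDD : D + D = Matrix.diagonal (fun i => ((lam i : ℝ) : ℂ)) * S'
      + S' * Matrix.diagonal (fun i => ((lam i : ℝ) : ℂ)) := by
    rw [hDdef, ← hTW, hS'def, conj_mul_mid hWW', conj_mul_mid hWW', conj_add, conj_add, hDelta2]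
  have hDdiag : ∀ i, D i i = ((lam i : ℝ) : ℂ) * S' i i := by
    intro i
    have h := congrArg (fun M : Matrix (Fin d) (Fin d) ℂ => M i i) hDD
    simp only [Matrix.add_apply, Matrix.diagonal_mul, Matrix.mul_diagonal] at h
    have h2 : (2 : ℂ) * (D i i) = 2 * (((lam i : ℝ) : ℂ) * S' i i) := by
      rw [two_mul, two_mul, h]
      ring
    exact mul_left_cancel₀ two_ne_zero h2
  have hlamS : ∀ i, |lam i| ≤ (S' i i).re := by
    intro i
    have hplus : (S' + Matrix.diagonal (fun i => ((lam i : ℝ) : ℂ))).PosSemidef := by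
      have h : S' + Matrix.diagonal (fun i => ((lam i : ℝ) : ℂ)) = Wᴴ * (S + T) * W := by
        rw [hS'def, ← hTW, conj_add]
      have h2 : S + T = A + A := by rw [hSdef, hTdef]; abel
      rw [h, h2]
      exact (hA.add hA).conjTranspose_mul_mul_same W
    have hminus : (S' - Matrix.diagonal (fun i => ((lam i : ℝ) : ℂ))).PosSemidef := by
      have h : S' - Matrix.diagonal (fun i => ((lam i : ℝ) : ℂ)) = Wᴴ * (S - T) * W := by
        rw [hS'def, ← hTW, conj_sub]
      have h2 : S - T = B + B := by rw [hSdef, hTdef]; abel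
      rw [h, h2]
      exact (hB.add hB).conjTranspose_mul_mul_same W
    have h1 := (psd_diag_nonneg hplus i).1
    have h2 := (psd_diag_nonneg hminus i).1
    rw [Matrix.add_apply, Complex.add_re, Matrix.diagonal_apply_eq, Complex.ofReal_re] at h1
    rw [Matrix.sub_apply, Complex.sub_re, Matrix.diagonal_apply_eq, Complex.ofReal_re] at h2
    exact abs_le.mpr ⟨by linarith, by linarith⟩
  have hT2 : ((T * T).trace).re = ∑ i, lam i ^ 2 := by
    have h : T * T = W * Matrix.diagonal
        (fun i => (((lam i : ℝ) : ℂ) * ((lam i : ℝ) : ℂ))) * Wᴴ := by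
      conv_lhs => rw [hTspec]
      rw [conj_mul_mid hWW, Matrix.diagonal_mul_diagonal]
    rw [h, Matrix.trace_mul_cycle, hWW, Matrix.one_mul]
    rw [Matrix.trace_diagonal, Complex.re_sum]
    refine Finset.sum_congr rfl fun i _ => ?_
    rw [← Complex.ofReal_mul, Complex.ofReal_re]
    ring
  have hsum : ∑ i, lam i ^ 2 ≤ ∑ i, |(D i i).re| := by
    refine Finset.sum_le_sum fun i _ => ?_
    rw [hDdiag i, Complex.re_ofReal_mul, abs_mul]
    have h1 : |lam i| * |lam i| ≤ |lam i| * |(S' i i).re| := by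
      refine mul_le_mul_of_nonneg_left ?_ (abs_nonneg _)
      exact le_trans (hlamS i) (le_abs_self _)
    calc lam i ^ 2 = |lam i| * |lam i| := by rw [← sq_abs, pow_two]
      _ ≤ |lam i| * |(S' i i).re| := h1
  have htnD : traceNorm D = traceNorm Delta := by
    rw [hDdef, Matrix.mul_assoc, traceNorm_unitary_left hWst, traceNorm_unitary_right hWmem]
  calc (((A - B) * (A - B)).trace).re = ((T * T).trace).re := by rw [hTdef]
    _ = ∑ i, lam i ^ 2 := hT2
    _ ≤ ∑ i, |(D i i).re| := hsum
    _ ≤ traceNorm D := sum_abs_diag_re_le_traceNorm hDH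
    _ = traceNorm Delta := htnD
    _ = traceNorm (A * A - B * B) := by rw [hDeltadef]

end FvG






/-- Fuchs–van de Graaf-type inequalities:
`(1/2) D_B² ≤ D_Tr ≤ D_B`; equivalently `1 − √F ≤ D_Tr` and `D_Tr² ≤ 2 − 2√F`. -/
theorem traceDist_buresDist_inequalities {d : ℕ} (ρ σ : Matrix (Fin d) (Fin d) ℂ)
    (hρ : ρ.PosSemidef) (hρ1 : ρ.trace = 1)
    (hσ : σ.PosSemidef) (hσ1 : σ.trace = 1) :
    (1 / 2) * buresDist ρ σ ^ 2 ≤ traceDist ρ σ ∧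
      traceDist ρ σ ≤ buresDist ρ σ ∧
      1 - Real.sqrt (fidelity ρ σ) ≤ traceDist ρ σ ∧
      traceDist ρ σ ^ 2 ≤ 2 - 2 * Real.sqrt (fidelity ρ σ) := by
  classical
  obtain ⟨A, hAdef⟩ : ∃ A, A = hρ.sqrt := ⟨_, rfl⟩
  obtain ⟨B, hBdef⟩ : ∃ B, B = hσ.sqrt := ⟨_, rfl⟩
  have hApsd : A.PosSemidef := by rw [hAdef]; exact hρ.posSemidef_sqrt
  have hBpsd : B.PosSemidef := by rw [hBdef]; exact hσ.posSemidef_sqrt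
  have hAH : Aᴴ = A := hApsd.1
  have hBH : Bᴴ = B := hBpsd.1
  have hAA : A * A = ρ := by rw [hAdef]; exact hρ.sqrt_mul_self
  have hBB : B * B = σ := by rw [hBdef]; exact hσ.sqrt_mul_self
  have hpsdSqrtρ : psdSqrt ρ = A := by rw [hAdef]; exact dif_pos hρ
  have hMeq : (B * A)ᴴ * (B * A) = A * σ * A := by
    rw [Matrix.conjTranspose_mul, hAH, hBH, ← hBB]
    noncomm_ring
  have hMpsd : (A * σ * A).PosSemidef := by
    have := hσ.mul_mul_conjTranspose_same A
    rwa [hAH] at this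
  set t := traceNorm (B * A) with htdef
  have ht0 : 0 ≤ t := FvG.traceNorm_nonneg _
  have hfid : fidelity ρ σ = t ^ 2 := by
    unfold fidelity
    rw [hpsdSqrtρ]
    have h1 : psdSqrt (A * σ * A) = hMpsd.sqrt := dif_pos hMpsd
    rw [h1, FvG.sqrt_congr hMpsd (Matrix.posSemidef_conjTranspose_mul_self (B * A)) hMeq.symm]
    rfl
  have hsfid : Real.sqrt (fidelity ρ σ) = t := by rw [hfid, Real.sqrt_sq ht0]
  have hfrobA : FvG.frobSq A = 1 := by
    unfold FvG.frobSq
    rw [hAH, hAA, hρ1]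
    simp
  have hfrobB : FvG.frobSq B = 1 := by
    unfold FvG.frobSq
    rw [hBH, hBB, hσ1]
    simp
  have ht1 : t ≤ 1 := by
    have h := FvG.traceNorm_mul_le B A
    rw [hfrobA, hfrobB] at h
    simpa using h
  have hDre : traceDist ρ σ = traceNorm (ρ - σ) / 2 := rfl
  have hD0 : 0 ≤ traceDist ρ σ := by
    rw [hDre]
    have := FvG.traceNorm_nonneg (ρ - σ)
    linarith
  -- lower bound via Powers–Størmer
  have hlow : 1 - t ≤ traceDist ρ σ := by
    have hPS := FvG.powers_stormer hApsd hBpsd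
    rw [hAA, hBB] at hPS
    have hexp : (((A - B) * (A - B)).trace).re = 2 - 2 * ((B * A).trace).re := by
      have h1 : (A - B) * (A - B) = (A * A + B * B) - (A * B + B * A) := by noncomm_ring
      rw [h1, Matrix.trace_sub, Matrix.trace_add, Matrix.trace_add, Complex.sub_re,
        Complex.add_re, Complex.add_re, hAA, hBB, hρ1, hσ1, Matrix.trace_mul_comm A B]
      simp
      ring
    rw [hexp] at hPS
    have h2 : ((B * A).trace).re ≤ t := FvG.re_trace_le_traceNorm (B * A)
    rw [hDre]
    linarith
  -- upper bound
  obtain ⟨U, hU, hpol⟩ := FvG.polar (B * A)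
  have hUU : Uᴴ * U = 1 := by
    simpa [Matrix.star_eq_conjTranspose] using (Matrix.mem_unitaryGroup_iff'.mp hU)
  have hUU' : U * Uᴴ = 1 := by
    simpa [Matrix.star_eq_conjTranspose] using (Matrix.mem_unitaryGroup_iff.mp hU)
  have hP : Uᴴ * (B * A) = (Matrix.posSemidef_conjTranspose_mul_self (B * A)).sqrt := by
    conv_lhs => rw [hpol]
    rw [← Matrix.mul_assoc, hUU, Matrix.one_mul]
  have htrP : ((Uᴴ * (B * A)).trace).re = t := by rw [hP]; rfl
  obtain ⟨N, hNdef⟩ : ∃ N, N = B * U := ⟨_, rfl⟩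
  have hNH : Nᴴ = Uᴴ * B := by rw [hNdef, Matrix.conjTranspose_mul, hBH]
  have hNN : N * Nᴴ = σ := by
    rw [hNH, hNdef]
    calc B * U * (Uᴴ * B) = B * (U * Uᴴ) * B := by noncomm_ring
      _ = σ := by rw [hUU', Matrix.mul_one, hBB]
  have htrAN : ((A * N).trace).re = t := by
    have h1 : A * N = (Uᴴ * (B * A))ᴴ := by
      rw [Matrix.conjTranspose_mul, Matrix.conjTranspose_mul, hAH, hBH,
        Matrix.conjTranspose_conjTranspose, hNdef]
      noncomm_ring
    rw [h1, Matrix.trace_conjTranspose, RCLike.star_def, Complex.conj_re]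
    exact htrP
  have htrNA : ((Nᴴ * A).trace).re = t := by
    rw [hNH, Matrix.mul_assoc]
    exact htrP
  have htrNN : ((Nᴴ * N).trace).re = 1 := by
    rw [Matrix.trace_mul_comm, hNN, hσ1]
    simp
  have e1 : FvG.frobSq (A - N) = 2 - 2 * t := by
    unfold FvG.frobSq
    have h1 : (A - N)ᴴ * (A - N) = (A * A + Nᴴ * N) - (A * N + Nᴴ * A) := by
      rw [Matrix.conjTranspose_sub, hAH]
      noncomm_ring
    rw [h1, Matrix.trace_sub, Matrix.trace_add, Matrix.trace_add, Complex.sub_re,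
      Complex.add_re, Complex.add_re, hAA, hρ1, htrNN, htrAN, htrNA]
    simp
    ring
  have e2 : FvG.frobSq (A + N) = 2 + 2 * t := by
    unfold FvG.frobSq
    have h1 : (A + N)ᴴ * (A + N) = (A * A + Nᴴ * N) + (A * N + Nᴴ * A) := by
      rw [Matrix.conjTranspose_add, hAH]
      noncomm_ring
    rw [h1, Matrix.trace_add, Matrix.trace_add, Matrix.trace_add, Complex.add_re,
      Complex.add_re, Complex.add_re, hAA, hρ1, htrNN, htrAN, htrNA]
    simp
    ring
  have hsplit : ρ - σ = ((2⁻¹ : ℂ) • (A - N)) * (A + N)ᴴ + ((2⁻¹ : ℂ) • (A + N)) * (A - N)ᴴ := by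
    have h4 : (A - N) * (A + N)ᴴ + (A + N) * (A - N)ᴴ = (ρ - σ) + (ρ - σ) := by
      rw [Matrix.conjTranspose_add, Matrix.conjTranspose_sub, hAH]
      have h : (A - N) * (A + Nᴴ) + (A + N) * (A - Nᴴ) = (A * A - N * Nᴴ) + (A * A - N * Nᴴ) := by
        noncomm_ring
      rw [h, hAA, hNN]
    have h5 : (2⁻¹ : ℂ) • ((ρ - σ) + (ρ - σ)) = ρ - σ := by
      rw [← two_smul ℂ (ρ - σ), smul_smul]
      norm_num
    calc ρ - σ = (2⁻¹ : ℂ) • ((ρ - σ) + (ρ - σ)) := h5.symm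
      _ = (2⁻¹ : ℂ) • ((A - N) * (A + N)ᴴ + (A + N) * (A - N)ᴴ) := by rw [h4]
      _ = _ := by rw [smul_add, ← Matrix.smul_mul, ← Matrix.smul_mul]
  have hc2 : ((2⁻¹ : ℝ) : ℂ) = (2⁻¹ : ℂ) := by norm_num
  have hfm : FvG.frobSq ((2⁻¹ : ℂ) • (A - N)) = 4⁻¹ * (2 - 2 * t) := by
    rw [← hc2, FvG.frobSq_real_smul, e1]
    norm_num
  have hfp : FvG.frobSq ((2⁻¹ : ℂ) • (A + N)) = 4⁻¹ * (2 + 2 * t) := by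
    rw [← hc2, FvG.frobSq_real_smul, e2]
    norm_num
  have h2t0 : 0 ≤ 2 - 2 * t := by linarith
  have h2t0' : 0 ≤ 2 + 2 * t := by linarith
  have hbound : traceNorm (ρ - σ) ≤ Real.sqrt (4⁻¹ * (2 - 2 * t)) * Real.sqrt (2 + 2 * t)
      + Real.sqrt (4⁻¹ * (2 + 2 * t)) * Real.sqrt (2 - 2 * t) := by
    rw [hsplit]
    refine le_trans (FvG.traceNorm_triangle _ _) (add_le_add ?_ ?_)
    · have h := FvG.traceNorm_mul_le ((2⁻¹ : ℂ) • (A - N)) ((A + N)ᴴ)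
      rwa [hfm, FvG.frobSq_conjTranspose, e2] at h
    · have h := FvG.traceNorm_mul_le ((2⁻¹ : ℂ) • (A + N)) ((A - N)ᴴ)
      rwa [hfp, FvG.frobSq_conjTranspose, e1] at h
  have h6 : Real.sqrt (4⁻¹ * (2 - 2 * t)) = 2⁻¹ * Real.sqrt (2 - 2 * t) := by
    rw [Real.sqrt_mul (by norm_num) _]
    congr 1
    rw [show (4⁻¹ : ℝ) = (2⁻¹) ^ 2 by norm_num, Real.sqrt_sq (by norm_num)]
  have h7 : Real.sqrt (4⁻¹ * (2 + 2 * t)) = 2⁻¹ * Real.sqrt (2 + 2 * t) := by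
    rw [Real.sqrt_mul (by norm_num) _]
    congr 1
    rw [show (4⁻¹ : ℝ) = (2⁻¹) ^ 2 by norm_num, Real.sqrt_sq (by norm_num)]
  have hbound2 : traceNorm (ρ - σ) ≤ Real.sqrt (2 - 2 * t) * Real.sqrt (2 + 2 * t) := by
    calc traceNorm (ρ - σ) ≤ _ := hbound
      _ = Real.sqrt (2 - 2 * t) * Real.sqrt (2 + 2 * t) := by rw [h6, h7]; ring
  have hconj4 : traceDist ρ σ ^ 2 ≤ 2 - 2 * t := by
    have hsq : (Real.sqrt (2 - 2 * t) * Real.sqrt (2 + 2 * t)) ^ 2 = (2 - 2 * t) * (2 + 2 * t) := by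
      rw [mul_pow, Real.sq_sqrt h2t0, Real.sq_sqrt h2t0']
    have h9 : 0 ≤ Real.sqrt (2 - 2 * t) * Real.sqrt (2 + 2 * t) := by positivity
    have h10 := FvG.traceNorm_nonneg (ρ - σ)
    have h11 : traceNorm (ρ - σ) ^ 2 ≤ (2 - 2 * t) * (2 + 2 * t) := by
      calc traceNorm (ρ - σ) ^ 2
          ≤ (Real.sqrt (2 - 2 * t) * Real.sqrt (2 + 2 * t)) ^ 2 :=
            pow_le_pow_left₀ h10 hbound2 2
        _ = (2 - 2 * t) * (2 + 2 * t) := hsq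
    have h8 : traceDist ρ σ ^ 2 ≤ (2 - 2 * t) * (2 + 2 * t) / 4 := by
      have h12 : traceDist ρ σ ^ 2 = traceNorm (ρ - σ) ^ 2 / 4 := by
        rw [hDre]
        ring
      rw [h12]
      linarith
    have harith : (2 - 2 * t) * (2 + 2 * t) / 4 ≤ 2 - 2 * t := by
      have hs := sq_nonneg (1 - t)
      have hexp : (1 - t) ^ 2 = 1 - 2 * t + t ^ 2 := by ring
      have hq : (2 - 2 * t) * (2 + 2 * t) / 4 = 1 - t ^ 2 := by ring
      rw [hq]
      linarith
    exact le_trans h8 harith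
  have hbure : buresDist ρ σ = Real.sqrt (2 - 2 * t) := by
    unfold buresDist
    rw [hsfid]
  have hbsq : buresDist ρ σ ^ 2 = 2 - 2 * t := by rw [hbure, Real.sq_sqrt h2t0]
  refine ⟨?_, ?_, ?_, ?_⟩
  · rw [hbsq]
    linarith
  · rw [hbure]
    exact (Real.le_sqrt hD0 h2t0).mpr hconj4
  · rw [hsfid]
    exact hlow
  · rw [hsfid]
    exact hconj4
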